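/- arXiv:1909.00103 — 4 statements merged into one kernel-verified Lean document; each statement's English description precedes it below -/
import Mathlib

section
/- Let w(x) = x^α (1-x)^β |x-t|^γ (A+Bθ(x-t)) on [0,1] with α,β,γ > 0, t ∈ (0,1), A ≥ 0, A+B ≥ 0, and let P_n be the monic orthogonal polynomials with norms h_n. Then integration by parts yields α ∫_0^1 P_n(y)^2 w(y)/y dy = β ∫_0^1 P_n(y)^2 w(y)/(1-y) dy − γ ∫_0^1 P_n(y)^2 w(y)/(y−t) dy, where the last integral is a principal value. Equivalently, with x_n := (α/h_n)∫_0^1 P_n^2 w/y dy and R_n := (β/h_n)∫_0^1 P_n^2 w/(1-y) dy, one has (γ/h_n) ∫_0^1 P_n(y)^2 w(y)/(y−t) dy = R_n − x_n. -/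
/-!
Integrate the derivative of `P_n² w` over `[0, 1]`. Since `γ > 0` the jump of the step factor is
absorbed by `|x - t| ^ γ`, so `P_n² w` is continuous, and it vanishes at both endpoints. Off `t`
its logarithmic derivative is `2 P_n' / P_n + α / y - β / (1 - y) + γ / (y - t)`, and the term
`∫ 2 P_n P_n' w` vanishes by orthogonality because `deg P_n' < n`. Each remaining integrand is
dominated by a power `|y - c| ^ (p - 1)` with `p > 0`, so all integrals converge absolutely and the
principal value is an ordinary integral.
-/

open MeasureTheory Polynomial Set intervalIntegral Interval

theorem LinearMap.map_orthogonal_mul_eq_zero_of_degree_lt {R : Type*} [CommRing R]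
    (L : R[X] →ₗ[R] R) {P : ℕ → R[X]} (hmonic : ∀ n, (P n).Monic)
    (hdeg : ∀ n, (P n).natDegree = n) (horth : ∀ m n, m ≠ n → L (P m * P n) = 0)
    {n : ℕ} {q : R[X]} (hq : q.degree < n) : L (P n * q) = 0 := by
  nontriviality R
  induction hd : q.natDegree using Nat.strong_induction_on generalizing q with
  | _ d ih =>
    by_cases hq0 : q = 0
    · simp [hq0]
    have hdn : d < n := by rw [degree_eq_natDegree hq0, hd] at hq; exact_mod_cast hq
    set r := q - C q.leadingCoeff * P d
    have hlead : (C q.leadingCoeff * P d).degree = q.degree := by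
      rw [degree_C_mul_of_mul_ne_zero (by simpa [(hmonic d).leadingCoeff] using hq0),
        degree_eq_natDegree (hmonic d).ne_zero, hdeg, degree_eq_natDegree hq0, hd]
    have hr : L (P n * r) = 0 := by
      by_cases hr0 : r = 0
      · simp [hr0]
      have hrd : r.natDegree < d := hd ▸ natDegree_lt_natDegree hr0
        (degree_sub_lt_left hlead.symm hq0 ((hmonic d).leadingCoeff_C_mul _).symm)
      exact ih _ hrd (degree_le_natDegree.trans_lt (by exact_mod_cast hrd.trans hdn)) rfl
    have hq : q = q.leadingCoeff • P d + r := by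
      rw [smul_eq_C_mul]; ring
    rw [hq, mul_add, mul_smul_comm, map_add, map_smul, horth n d hdn.ne', hr, smul_zero,
      add_zero]

@[simps]
noncomputable def IntervalIntegrable.weightedIntegralₗ {w : ℝ → ℝ} {a b : ℝ}
    (hw : IntervalIntegrable w volume a b) : ℝ[X] →ₗ[ℝ] ℝ where
  toFun q := ∫ x in a..b, q.eval x * w x
  map_add' p q := by
    simp only [eval_add, add_mul]
    exact integral_add (hw.continuousOn_mul p.continuousOn) (hw.continuousOn_mul q.continuousOn)
  map_smul' c q := by
    simp only [eval_smul, smul_eq_mul, mul_assoc, intervalIntegral.integral_const_mul,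
      RingHom.id_apply]

theorem intervalIntegrable_abs_sub_rpow {r : ℝ} (hr : -1 < r) (c a b : ℝ) :
    IntervalIntegrable (fun x => |x - c| ^ r) volume a b := by
  have h : IntervalIntegrable (fun x : ℝ => |x| ^ r) volume (a - c) (b - c) :=
    intervalIntegrable_of_even (fun x => by rw [abs_neg]) fun d hd =>
      (intervalIntegrable_rpow' hr).congr fun x hx => by
        rw [uIoc_of_le hd.le] at hx
        simp [abs_of_pos hx.1]
  simpa using h.comp_sub_right c

theorem abs_div_le_mul_rpow_sub_one {a b K p : ℝ} (hK : 0 ≤ K) (h : |a| ≤ K * |b| ^ p) :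
    |a / b| ≤ K * |b| ^ (p - 1) := by
  rcases eq_or_ne b 0 with rfl | hb
  · simp only [div_zero, abs_zero]; positivity
  rw [abs_div, Real.rpow_sub_one (abs_ne_zero.2 hb), mul_div_assoc']
  exact div_le_div_of_nonneg_right h (abs_nonneg b)

theorem IntervalIntegrable.div_of_abs_le_mul_rpow {f u : ℝ → ℝ} {a b K p : ℝ}
    (hK : 0 ≤ K) (hf : Measurable f) (hu : Measurable u)
    (hint : IntervalIntegrable (fun x => |u x| ^ (p - 1)) volume a b)
    (hle : ∀ x ∈ Ι a b, |f x| ≤ K * |u x| ^ p) :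
    IntervalIntegrable (fun x => f x / u x) volume a b :=
  (hint.const_mul K).mono_fun' (hf.div hu).aestronglyMeasurable
    ((ae_restrict_iff' measurableSet_uIoc).2 (ae_of_all _ fun x hx =>
      abs_div_le_mul_rpow_sub_one hK (hle x hx)))

noncomputable def jacobiJumpWeight (α β γ A B t x : ℝ) : ℝ :=
  x ^ α * (1 - x) ^ β * |x - t| ^ γ * (A + B * if t < x then 1 else 0)

theorem abs_sub_rpow_mul_jump {γ : ℝ} (hγ : γ ≠ 0) (A B t x : ℝ) :
    |x - t| ^ γ * (A + B * if t < x then 1 else 0) = A * |x - t| ^ γ + B * max (x - t) 0 ^ γ := by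
  split_ifs with h
  · rw [max_eq_left (sub_nonneg.2 h.le), abs_of_pos (sub_pos.2 h)]; ring
  · rw [max_eq_right (sub_nonpos.2 (not_lt.1 h)), Real.zero_rpow hγ]; ring

theorem hasDerivAt_abs_sub_rpow {γ t y : ℝ} (hy : y ≠ t) :
    HasDerivAt (fun x => |x - t| ^ γ) (γ * |y - t| ^ γ / (y - t)) y := by
  have hyt : y - t ≠ 0 := sub_ne_zero.2 hy
  have habs : HasDerivAt (fun x => |x - t|) (SignType.sign (y - t) : ℝ) y := by
    simpa [Function.comp_def] using (hasDerivAt_abs hyt).comp y ((hasDerivAt_id' y).sub_const t)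
  convert habs.rpow_const (p := γ) (Or.inl (abs_ne_zero.2 hyt)) using 1
  rw [Real.rpow_sub_one (abs_ne_zero.2 hyt)]
  rcases hyt.lt_or_gt with h | h
  · rw [sign_neg h, SignType.coe_neg_one, abs_of_neg h]; field_simp
  · rw [sign_pos h, SignType.coe_one, abs_of_pos h]; ring

theorem hasDerivAt_jump_of_ne {A B t y : ℝ} (hy : y ≠ t) :
    HasDerivAt (fun x => A + B * if t < x then (1 : ℝ) else 0) 0 y := by
  refine (hasDerivAt_const y (A + B * if t < y then (1 : ℝ) else 0)).congr_of_eventuallyEq ?_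
  rcases hy.lt_or_gt with h | h
  · filter_upwards [Iio_mem_nhds h] with x hx
    simp [not_lt.2 h.le, not_lt.2 (mem_Iio.1 hx).le]
  · filter_upwards [Ioi_mem_nhds h] with x hx
    simp [h, mem_Ioi.1 hx]

section JacobiJumpWeight

variable {α β γ A B t : ℝ}

theorem continuous_jacobiJumpWeight (hα : 0 ≤ α) (hβ : 0 ≤ β) (hγ : 0 < γ) :
    Continuous (jacobiJumpWeight α β γ A B t) := by
  have h : jacobiJumpWeight α β γ A B t =
      fun x => x ^ α * (1 - x) ^ β * (A * |x - t| ^ γ + B * max (x - t) 0 ^ γ) :=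
    funext fun x => by
      rw [jacobiJumpWeight, mul_assoc _ (|x - t| ^ γ), abs_sub_rpow_mul_jump hγ.ne']
  rw [h]
  have := hγ.le
  fun_prop (disch := first | assumption | exact fun _ => Or.inr ‹_›)

theorem hasDerivAt_jacobiJumpWeight {y : ℝ} (hy0 : 0 < y) (hy1 : y < 1) (hyt : y ≠ t) :
    HasDerivAt (jacobiJumpWeight α β γ A B t)
      (jacobiJumpWeight α β γ A B t y * (α / y - β / (1 - y) + γ / (y - t))) y := by
  have h1 : HasDerivAt (fun x => x ^ α) (α * y ^ α / y) y := by
    simpa [Real.rpow_sub_one hy0.ne', mul_div_assoc] using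
      Real.hasDerivAt_rpow_const (p := α) (Or.inl hy0.ne')
  have h2 : HasDerivAt (fun x => (1 - x) ^ β) (-(β * (1 - y) ^ β / (1 - y))) y := by
    simpa [Real.rpow_sub_one (sub_pos.2 hy1).ne', mul_div_assoc] using
      ((hasDerivAt_id' y).const_sub 1).rpow_const (p := β) (Or.inl (sub_pos.2 hy1).ne')
  refine (((h1.fun_mul h2).fun_mul (hasDerivAt_abs_sub_rpow hyt)).fun_mul
    (hasDerivAt_jump_of_ne hyt)).congr_deriv ?_
  have := sub_ne_zero.2 hyt
  have := (sub_pos.2 hy1).ne'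
  simp only [jacobiJumpWeight]
  field_simp
  ring

theorem abs_jacobiJumpWeight_le (hα : 0 ≤ α) (hβ : 0 ≤ β) (hγ : 0 ≤ γ) (ht : t ∈ Icc 0 1)
    {x : ℝ} (hx : x ∈ Icc 0 1) :
    |jacobiJumpWeight α β γ A B t x| ≤ (|A| + |B|) * |x| ^ α ∧
      |jacobiJumpWeight α β γ A B t x| ≤ (|A| + |B|) * |1 - x| ^ β ∧
      |jacobiJumpWeight α β γ A B t x| ≤ (|A| + |B|) * |x - t| ^ γ := by
  obtain ⟨hx0, hx1⟩ := hx
  have ha : x ^ α ≤ 1 := Real.rpow_le_one hx0 hx1 hα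
  have hb : (1 - x) ^ β ≤ 1 := Real.rpow_le_one (by linarith) (by linarith) hβ
  have hc : |x - t| ^ γ ≤ 1 :=
    Real.rpow_le_one (abs_nonneg _) (abs_le.2 ⟨by linarith [ht.2], by linarith [ht.1]⟩) hγ
  have hs : |A + B * if t < x then (1 : ℝ) else 0| ≤ |A| + |B| := by
    refine (abs_add_le _ _).trans (add_le_add_right ?_ _)
    split_ifs <;> simp
  have hw : |jacobiJumpWeight α β γ A B t x| =
      x ^ α * (1 - x) ^ β * |x - t| ^ γ * |A + B * if t < x then (1 : ℝ) else 0| := by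
    rw [jacobiJumpWeight, abs_mul, abs_mul, abs_mul, abs_of_nonneg (Real.rpow_nonneg hx0 _),
      abs_of_nonneg (Real.rpow_nonneg (sub_nonneg.2 hx1) _),
      abs_of_nonneg (Real.rpow_nonneg (abs_nonneg _) _)]
  rw [hw, abs_of_nonneg hx0, abs_of_nonneg (sub_nonneg.2 hx1)]
  refine ⟨?_, ?_, ?_⟩
  · calc _ ≤ x ^ α * 1 * 1 * (|A| + |B|) := by gcongr
      _ = _ := by ring
  · calc _ ≤ 1 * (1 - x) ^ β * 1 * (|A| + |B|) := by gcongr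
      _ = _ := by ring
  · calc _ ≤ 1 * 1 * |x - t| ^ γ * (|A| + |B|) := by gcongr
      _ = _ := by ring

theorem intervalIntegrable_jacobiJumpWeight_div_self (hα : 0 < α) (hβ : 0 ≤ β) (hγ : 0 < γ)
    (ht : t ∈ Icc 0 1) :
    IntervalIntegrable (fun x => jacobiJumpWeight α β γ A B t x / x) volume 0 1 :=
  .div_of_abs_le_mul_rpow (by positivity) (continuous_jacobiJumpWeight hα.le hβ hγ).measurable
    measurable_id (by simpa using intervalIntegrable_abs_sub_rpow (by linarith) 0 0 1)
    fun _ hx => (abs_jacobiJumpWeight_le hα.le hβ hγ.le ht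
      (Ioc_subset_Icc_self (by rwa [uIoc_of_le zero_le_one] at hx))).1

theorem intervalIntegrable_jacobiJumpWeight_div_one_sub (hα : 0 ≤ α) (hβ : 0 < β) (hγ : 0 < γ)
    (ht : t ∈ Icc 0 1) :
    IntervalIntegrable (fun x => jacobiJumpWeight α β γ A B t x / (1 - x)) volume 0 1 :=
  .div_of_abs_le_mul_rpow (by positivity) (continuous_jacobiJumpWeight hα hβ.le hγ).measurable
    (measurable_const.sub measurable_id)
    (by simpa [abs_sub_comm] using intervalIntegrable_abs_sub_rpow (by linarith) 1 0 1)
    fun _ hx => (abs_jacobiJumpWeight_le hα hβ.le hγ.le ht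
      (Ioc_subset_Icc_self (by rwa [uIoc_of_le zero_le_one] at hx))).2.1

theorem intervalIntegrable_jacobiJumpWeight_div_sub (hα : 0 ≤ α) (hβ : 0 ≤ β) (hγ : 0 < γ)
    (ht : t ∈ Icc 0 1) :
    IntervalIntegrable (fun x => jacobiJumpWeight α β γ A B t x / (x - t)) volume 0 1 :=
  .div_of_abs_le_mul_rpow (by positivity) (continuous_jacobiJumpWeight hα hβ hγ).measurable
    (measurable_id.sub measurable_const) (intervalIntegrable_abs_sub_rpow (by linarith) t 0 1)
    fun _ hx => (abs_jacobiJumpWeight_le hα hβ hγ.le ht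
      (Ioc_subset_Icc_self (by rwa [uIoc_of_le zero_le_one] at hx))).2.2

theorem integral_derivative_mul_jacobiJumpWeight (hα : 0 < α) (hβ : 0 < β) (hγ : 0 < γ)
    (ht : t ∈ Icc 0 1) (q : ℝ[X]) :
    ∫ x in (0 : ℝ)..1, (derivative q).eval x * jacobiJumpWeight α β γ A B t x =
      β * (∫ x in (0 : ℝ)..1, q.eval x * jacobiJumpWeight α β γ A B t x / (1 - x))
        - α * (∫ x in (0 : ℝ)..1, q.eval x * jacobiJumpWeight α β γ A B t x / x)
        - γ * ∫ x in (0 : ℝ)..1, q.eval x * jacobiJumpWeight α β γ A B t x / (x - t) := by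
  set w := jacobiJumpWeight α β γ A B t
  have hw := continuous_jacobiJumpWeight (A := A) (B := B) (t := t) hα.le hβ.le hγ
  have hq : ContinuousOn q.eval (uIcc 0 1) := q.continuousOn
  have i0 : IntervalIntegrable (fun x => (derivative q).eval x * w x) volume 0 1 :=
    ((derivative q).continuous.mul hw).intervalIntegrable 0 1
  have i1 : IntervalIntegrable (fun x => q.eval x * w x / x) volume 0 1 := by
    simpa only [mul_div_assoc] using
      (intervalIntegrable_jacobiJumpWeight_div_self hα hβ.le hγ ht).continuousOn_mul hq
  have i2 : IntervalIntegrable (fun x => q.eval x * w x / (1 - x)) volume 0 1 := by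
    simpa only [mul_div_assoc] using
      (intervalIntegrable_jacobiJumpWeight_div_one_sub hα.le hβ hγ ht).continuousOn_mul hq
  have i3 : IntervalIntegrable (fun x => q.eval x * w x / (x - t)) volume 0 1 := by
    simpa only [mul_div_assoc] using
      (intervalIntegrable_jacobiJumpWeight_div_sub hα.le hβ.le hγ ht).continuousOn_mul hq
  have hftc : ∫ x in (0 : ℝ)..1, ((derivative q).eval x * w x + (α * (q.eval x * w x / x)
      - β * (q.eval x * w x / (1 - x)) + γ * (q.eval x * w x / (x - t)))) = 0 := by
    rw [integral_eq_of_hasDerivAt_off_countable_of_le (fun x => q.eval x * w x) _ zero_le_one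
      (countable_singleton t) (q.continuous.mul hw).continuousOn
      (fun x hx => ((q.hasDerivAt x).mul
        (hasDerivAt_jacobiJumpWeight hx.1.1 hx.1.2 hx.2)).congr_deriv (by ring))
      (i0.add (((i1.const_mul α).sub (i2.const_mul β)).add (i3.const_mul γ)))]
    simp [w, jacobiJumpWeight, Real.zero_rpow hα.ne', Real.zero_rpow hβ.ne']
  rw [integral_add i0 (((i1.const_mul α).sub (i2.const_mul β)).add (i3.const_mul γ)),
    integral_add ((i1.const_mul α).sub (i2.const_mul β)) (i3.const_mul γ),
    integral_sub (i1.const_mul α) (i2.const_mul β), intervalIntegral.integral_const_mul,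
    intervalIntegral.integral_const_mul, intervalIntegral.integral_const_mul] at hftc
  linarith

end JacobiJumpWeight

theorem ibp_Pn_squared_general (α β γ A B t : ℝ)
    (hα : 0 < α) (hβ : 0 < β) (hγ : 0 < γ)
    (ht : t ∈ Set.Ioo (0 : ℝ) 1)
    (w : ℝ → ℝ)
    (hw : ∀ x, w x = x ^ α * (1 - x) ^ β * |x - t| ^ γ *
      (A + B * (if t < x then (1 : ℝ) else 0)))
    (P : ℕ → Polynomial ℝ) (h : ℕ → ℝ)
    (hmonic : ∀ n, (P n).Monic)
    (hdeg : ∀ n, (P n).natDegree = n)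
    (horth : ∀ m n, ∫ x in (0 : ℝ)..1, (P m).eval x * (P n).eval x * w x
      = if m = n then h n else 0)
    (n : ℕ) :
    α * ∫ y in (0 : ℝ)..1, ((P n).eval y) ^ 2 * w y / y
      = β * (∫ y in (0 : ℝ)..1, ((P n).eval y) ^ 2 * w y / (1 - y))
        - γ * ∫ y in (0 : ℝ)..1, ((P n).eval y) ^ 2 * w y / (y - t) ∧
    (γ / h n) * ∫ y in (0 : ℝ)..1, ((P n).eval y) ^ 2 * w y / (y - t)
      = (β / h n) * (∫ y in (0 : ℝ)..1, ((P n).eval y) ^ 2 * w y / (1 - y))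
        - (α / h n) * ∫ y in (0 : ℝ)..1, ((P n).eval y) ^ 2 * w y / y := by
  obtain rfl : w = jacobiJumpWeight α β γ A B t := funext hw
  have hwint : IntervalIntegrable (jacobiJumpWeight α β γ A B t) volume 0 1 :=
    (continuous_jacobiJumpWeight hα.le hβ.le hγ).intervalIntegrable 0 1
  have hderiv : derivative (P n ^ 2) = P n * ((2 : ℝ) • derivative (P n)) := by
    rw [derivative_sq, smul_eq_C_mul]; ring
  have hortho : ∫ x in (0 : ℝ)..1,
      (derivative (P n ^ 2)).eval x * jacobiJumpWeight α β γ A B t x = 0 := by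
    rw [hderiv]
    refine hwint.weightedIntegralₗ.map_orthogonal_mul_eq_zero_of_degree_lt hmonic hdeg
      (fun m k hmk => ?_) ?_
    · simpa only [IntervalIntegrable.weightedIntegralₗ_apply, eval_mul, if_neg hmk] using horth m k
    · refine (degree_smul_le _ _).trans_lt ((degree_derivative_lt (hmonic n).ne_zero).trans_eq ?_)
      rw [degree_eq_natDegree (hmonic n).ne_zero, hdeg]
  have hibp := integral_derivative_mul_jacobiJumpWeight (A := A) (B := B) hα hβ hγ
    (Ioo_subset_Icc_self ht) (P n ^ 2)
  rw [hortho] at hibp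
  simp only [eval_pow] at hibp
  refine ⟨by linarith, ?_⟩
  rw [div_mul_eq_mul_div, div_mul_eq_mul_div, div_mul_eq_mul_div, ← sub_div]
  congr 1
  linarith

/-- Integration by parts for the degenerate Jacobi weight:
`α ∫ P_n² w/y = β ∫ P_n² w/(1-y) − γ ∫ P_n² w/(y−t)`, equivalently
`(γ/h_n) ∫ P_n² w/(y−t) = R_n − x_n`. -/
theorem ibp_Pn_squared (α β γ A B t : ℝ)
    (hα : 0 < α) (hβ : 0 < β) (hγ : 0 < γ)
    (hA : 0 ≤ A) (hAB : 0 ≤ A + B) (ht : t ∈ Set.Ioo (0 : ℝ) 1)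
    (w : ℝ → ℝ)
    (hw : ∀ x, w x = x ^ α * (1 - x) ^ β * |x - t| ^ γ *
      (A + B * (if t < x then (1 : ℝ) else 0)))
    (P : ℕ → Polynomial ℝ) (h : ℕ → ℝ)
    (hmonic : ∀ n, (P n).Monic)
    (hdeg : ∀ n, (P n).natDegree = n)
    (horth : ∀ m n, ∫ x in (0 : ℝ)..1, (P m).eval x * (P n).eval x * w x
      = if m = n then h n else 0)
    (hpos : ∀ n, 0 < h n)
    (n : ℕ) :
    α * ∫ y in (0 : ℝ)..1, ((P n).eval y) ^ 2 * w y / y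
      = β * (∫ y in (0 : ℝ)..1, ((P n).eval y) ^ 2 * w y / (1 - y))
        - γ * ∫ y in (0 : ℝ)..1, ((P n).eval y) ^ 2 * w y / (y - t) ∧
    (γ / h n) * ∫ y in (0 : ℝ)..1, ((P n).eval y) ^ 2 * w y / (y - t)
      = (β / h n) * (∫ y in (0 : ℝ)..1, ((P n).eval y) ^ 2 * w y / (1 - y))
        - (α / h n) * ∫ y in (0 : ℝ)..1, ((P n).eval y) ^ 2 * w y / y :=
  ibp_Pn_squared_general α β γ A B t hα hβ hγ ht w hw P h hmonic hdeg horth n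
end

section
/- Suppose the sequences R_n, r_n, α_n, β_n satisfy: r_{n+1} + r_n = (1−α_n) R_n − β for all n ≥ 0, and β_{n+1} R_{n+1} − β_n R_{n-1} = (1−α_n)(r_{n+1} − r_n) for all n ≥ 0, with initial conditions β_0 R_0 R_{-1} = 0 and r_0 = 0. Then for all n ≥ 0, β_n R_n R_{n-1} = r_n² + β r_n. -/
/-- Telescoped product identity: `β_n R_n R_{n-1} = r_n² + β r_n`. -/
theorem beta_R_R_identity (β : ℝ) (R r αs βs : ℤ → ℝ)
    (h1 : ∀ n : ℤ, 0 ≤ n → r (n + 1) + r n = (1 - αs n) * R n - β)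
    (h2 : ∀ n : ℤ, 0 ≤ n →
      βs (n + 1) * R (n + 1) - βs n * R (n - 1) = (1 - αs n) * (r (n + 1) - r n))
    (h0 : βs 0 * R 0 * R (-1) = 0)
    (hr0 : r 0 = 0) :
    ∀ n : ℤ, 0 ≤ n → βs n * R n * R (n - 1) = (r n) ^ 2 + β * r n := by
  refine Int.le_induction ?_ ?_
  · rw [hr0]; simpa using h0
  · intro m hm ih
    have e1 := h1 m hm
    have e2 := h2 m hm
    have h3 : (1 - αs m) * R m = r (m + 1) + r m + β := by linarith
    rw [show m + 1 - 1 = m by ring]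
    linear_combination R m * e2 + (r (m + 1) - r m) * h3 + ih
end

section
/- Suppose the sequences x_n, y_n, α_n, β_n satisfy: y_{n+1} + y_n = α − α_n x_n for all n ≥ 0, and β_{n+1} x_{n+1} − β_n x_{n-1} = −α_n (y_{n+1} − y_n) for all n ≥ 0, with β_0 x_0 x_{-1} = 0 and y_0 = 0. Then for all n ≥ 0, β_n x_n x_{n-1} = y_n² − α y_n. -/
/-- Telescoped product identity: `β_n x_n x_{n-1} = y_n² − α y_n`. -/
theorem beta_x_x_identity (α : ℝ) (x y αs βs : ℤ → ℝ)
    (h1 : ∀ n : ℤ, 0 ≤ n → y (n + 1) + y n = α - αs n * x n)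
    (h2 : ∀ n : ℤ, 0 ≤ n →
      βs (n + 1) * x (n + 1) - βs n * x (n - 1) = -(αs n) * (y (n + 1) - y n))
    (h0 : βs 0 * x 0 * x (-1) = 0)
    (hy0 : y 0 = 0) :
    ∀ n : ℤ, 0 ≤ n → βs n * x n * x (n - 1) = (y n) ^ 2 - α * y n := by
  refine Int.le_induction ?_ ?_
  · simp [hy0, h0]
  · intro n hn ih
    have e1 := h1 n hn
    have e2 := h2 n hn
    have key : βs (n + 1) * x (n + 1) * x n - βs n * x n * x (n - 1)
        = -(αs n * x n) * (y (n + 1) - y n) := by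
      have := congrArg (· * x n) e2
      simp only [sub_mul] at this
      linarith [this]
    have : -(αs n * x n) = y (n + 1) + y n - α := by linarith
    rw [this] at key
    have : n + 1 - 1 = n := by ring
    rw [this]
    nlinarith [key, ih]
end

section
/- Suppose real sequences R_n, x_n, r_n, y_n, β_n and a constant γ satisfy: β_{n+1}(R_{n+1}−x_{n+1}) − β_n(R_{n-1}−x_{n-1}) = (t−α_n)(r_{n+1}−r_n−y_{n+1}+y_n−1), and (t−α_n)(R_n−x_n) = r_{n+1}+r_n−y_{n+1}−y_n−2n−1−γ, for all n ≥ 0, with β_0(R_0−x_0)(R_{-1}−x_{-1}) = 0, r_0 = 0, y_0 = 0. Then β_n (R_n − x_n)(R_{n-1} − x_{n-1}) = (r_n − y_n − n − γ)(r_n − y_n − n) for all n ≥ 0. -/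
/-!
Put `a_n = R_n - x_n` and `s_n = r_n - y_n`. Multiplying the first relation by `a_n` and
substituting the second one for `(t - α_n) a_n` shows that `β_n a_n a_{n-1}` and
`(s_n - n - γ)(s_n - n)` have the same forward differences, the latter being the perfect
difference `(s_{n+1} - s_n - 1)(s_{n+1} + s_n - 2n - 1 - γ)`. Both sides vanish at `n = 0`.
-/

theorem Int.eq_of_sub_eq_of_le {G : Type*} [AddGroup G] {f g : ℤ → G} {m : ℤ}
    (hm : f m = g m) (hstep : ∀ n, m ≤ n → f (n + 1) - f n = g (n + 1) - g n) :
    ∀ n, m ≤ n → f n = g n :=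
  Int.leInduction hm fun n hn ih => by
    rw [← sub_add_cancel (f (n + 1)) (f n), hstep n hn, ih, sub_add_cancel]

theorem beta_Rx_Rx_sub_eq_sub {K : Type*} [CommRing K]
    {b₁ b₂ a₀ a₁ a₂ c s₁ s₂ n γ : K}
    (hb : b₂ * a₂ - b₁ * a₀ = c * (s₂ - s₁ - 1))
    (ha : c * a₁ = s₂ + s₁ - 2 * n - 1 - γ) :
    b₂ * a₂ * a₁ - b₁ * a₁ * a₀
      = (s₂ - (n + 1) - γ) * (s₂ - (n + 1)) - (s₁ - n - γ) * (s₁ - n) := by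
  linear_combination a₁ * hb + (s₂ - s₁ - 1) * ha

/-- Telescoped identity:
`β_n (R_n − x_n)(R_{n-1} − x_{n-1}) = (r_n − y_n − n − γ)(r_n − y_n − n)`. -/
theorem beta_Rx_Rx_identity (t γ : ℝ) (R x r y αs βs : ℤ → ℝ)
    (h1 : ∀ n : ℤ, 0 ≤ n →
      βs (n + 1) * (R (n + 1) - x (n + 1)) - βs n * (R (n - 1) - x (n - 1))
        = (t - αs n) * (r (n + 1) - r n - y (n + 1) + y n - 1))
    (h2 : ∀ n : ℤ, 0 ≤ n →
      (t - αs n) * (R n - x n)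
        = r (n + 1) + r n - y (n + 1) - y n - 2 * (n : ℝ) - 1 - γ)
    (h0 : βs 0 * (R 0 - x 0) * (R (-1) - x (-1)) = 0)
    (hr0 : r 0 = 0) (hy0 : y 0 = 0) :
    ∀ n : ℤ, 0 ≤ n →
      βs n * (R n - x n) * (R (n - 1) - x (n - 1))
        = (r n - y n - (n : ℝ) - γ) * (r n - y n - (n : ℝ)) := by
  refine Int.eq_of_sub_eq_of_le (f := fun n => βs n * (R n - x n) * (R (n - 1) - x (n - 1)))
    (g := fun n => (r n - y n - (n : ℝ) - γ) * (r n - y n - (n : ℝ))) ?_ ?_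
  · simp [h0, hr0, hy0]
  · intro n hn
    simpa using
      beta_Rx_Rx_sub_eq_sub (s₁ := r n - y n) (s₂ := r (n + 1) - y (n + 1)) (γ := γ)
        ((h1 n hn).trans (by ring)) ((h2 n hn).trans (by ring))
end
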